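/- Let (R, 𝔪) be a Noetherian local ring, M a finitely generated R-module with dimension filtration {D_i}_{0 ≤ i ≤ ℓ}. Then for each 0 ≤ i < ℓ, Ass_R(M/D_i) = { 𝔭 ∈ Ass_R M : dim R/𝔭 ≥ d_{i+1} }, where d_j = dim D_j. -/

import Mathlib

open IsLocalRing

/-- Krull dimension of a module, i.e. of `R` modulo its annihilator. -/
noncomputable def dimMod (R : Type*) [CommRing R] (M : Type*) [AddCommGroup M] [Module R M] :
    WithBot ℕ∞ := ringKrullDim (R ⧸ Module.annihilator R M)

/-- `D 0 = 0 ⊊ D 1 ⊊ ⋯ ⊊ D ℓ = M` is the dimension filtration of `M`: each `D i` is the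
largest submodule of `D (i+1)` of strictly smaller dimension. -/
def IsDimFiltration {R M : Type*} [CommRing R] [AddCommGroup M] [Module R M]
    (ℓ : ℕ) (D : ℕ → Submodule R M) : Prop :=
  D 0 = ⊥ ∧ D ℓ = ⊤ ∧ (∀ i < ℓ, D i < D (i + 1)) ∧
    (∀ i < ℓ, dimMod R ↥(D i) < dimMod R ↥(D (i + 1))) ∧
    (∀ i < ℓ, ∀ L : Submodule R M, L ≤ D (i + 1) →
      dimMod R ↥L < dimMod R ↥(D (i + 1)) → L ≤ D i)

/-- Quotient Krull dimension is antitone in the ideal. -/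
lemma dimQuot_anti {R : Type*} [CommRing R] {I J : Ideal R} (h : I ≤ J) :
    ringKrullDim (R ⧸ J) ≤ ringKrullDim (R ⧸ I) :=
  ringKrullDim_le_of_surjective (Ideal.Quotient.factor h) (fun x => by
    obtain ⟨r, rfl⟩ := Ideal.Quotient.mk_surjective x
    exact ⟨Ideal.Quotient.mk I r, Ideal.Quotient.factor_mk h r⟩)

/-- A chain of primes each containing `K` bounds `ringKrullDim (R ⧸ K)` from below. -/
lemma length_le_ringKrullDim_quotient {R : Type*} [CommRing R] (K : Ideal R)
    (n : ℕ) (P : Fin (n + 1) → Ideal R) (hP : ∀ k, (P k).IsPrime)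
    (hK : ∀ k, K ≤ P k) (hmono : StrictMono P) :
    (n : WithBot ℕ∞) ≤ ringKrullDim (R ⧸ K) := by
  have hker : ∀ k, RingHom.ker (Ideal.Quotient.mk K) ≤ P k := by
    intro k; rw [Ideal.mk_ker]; exact hK k
  let f : Fin (n + 1) → PrimeSpectrum (R ⧸ K) := fun k =>
    ⟨(P k).map (Ideal.Quotient.mk K),
      haveI := hP k
      Ideal.map_isPrime_of_surjective Ideal.Quotient.mk_surjective (hker k)⟩
  have hcomap : ∀ k, Ideal.comap (Ideal.Quotient.mk K) ((P k).map (Ideal.Quotient.mk K)) = P k := by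
    intro k
    rw [Ideal.comap_map_of_surjective _ Ideal.Quotient.mk_surjective, ← RingHom.ker_eq_comap_bot]
    exact sup_eq_left.mpr (hker k)
  have hf : StrictMono f := by
    intro a b hab
    refine lt_of_le_of_ne (Ideal.map_mono (hmono hab).le) ?_
    intro hEq
    have := congrArg (Ideal.comap (Ideal.Quotient.mk K)) (congrArg PrimeSpectrum.asIdeal hEq)
    rw [hcomap a, hcomap b] at this
    exact (hmono hab).ne this
  exact Order.LTSeries.length_le_krullDim (α := PrimeSpectrum (R ⧸ K))
    ⟨n, f, fun k => hf (Fin.castSucc_lt_succ (i := k))⟩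

/-- `dim R/(I*J) ≤ max (dim R/I) (dim R/J)`. -/
lemma ringKrullDim_quotient_mul_le {R : Type*} [CommRing R] (I J : Ideal R) :
    ringKrullDim (R ⧸ (I * J)) ≤ max (ringKrullDim (R ⧸ I)) (ringKrullDim (R ⧸ J)) := by
  show Order.krullDim (PrimeSpectrum (R ⧸ (I * J))) ≤ _
  rw [Order.krullDim]
  apply iSup_le
  intro p
  set P : Fin (p.length + 1) → Ideal R :=
    fun k => Ideal.comap (Ideal.Quotient.mk (I * J)) (p k).asIdeal with hPdef
  have hprime : ∀ k, (P k).IsPrime := fun k => Ideal.IsPrime.comap _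
  have hIJ : ∀ k, I * J ≤ P k := by
    intro k
    rw [← Ideal.mk_ker (I := I * J), RingHom.ker_eq_comap_bot]
    exact Ideal.comap_mono bot_le
  have hmono : StrictMono P := by
    intro a b hab
    refine lt_of_le_of_ne (Ideal.comap_mono (p.strictMono hab).le) ?_
    intro hEq
    exact (p.strictMono hab).ne (PrimeSpectrum.ext
      (Ideal.comap_injective_of_surjective _ Ideal.Quotient.mk_surjective hEq))
  rcases (hprime 0).mul_le.mp (hIJ 0) with h | h
  · refine le_trans (length_le_ringKrullDim_quotient I p.length P hprime ?_ hmono) (le_max_left _ _)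
    exact fun k => h.trans (hmono.monotone (Fin.zero_le k))
  · refine le_trans (length_le_ringKrullDim_quotient J p.length P hprime ?_ hmono) (le_max_right _ _)
    exact fun k => h.trans (hmono.monotone (Fin.zero_le k))

section

variable {R M : Type*} [CommRing R] [AddCommGroup M] [Module R M]

lemma IsDimFiltration.dim_mono {ℓ : ℕ} {D : ℕ → Submodule R M} (hD : IsDimFiltration ℓ D)
    {i j : ℕ} (hij : i ≤ j) (hj : j ≤ ℓ) : dimMod R ↥(D i) ≤ dimMod R ↥(D j) := by
  induction j, hij using Nat.le_induction with
  | base => exact le_rfl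
  | succ j hij ih => exact le_trans (ih (by omega)) (hD.2.2.2.1 j (by omega)).le

lemma IsDimFiltration.le_of_dim_lt {ℓ : ℕ} {D : ℕ → Submodule R M} (hD : IsDimFiltration ℓ D)
    {i : ℕ} (hi : i < ℓ) (L : Submodule R M)
    (hdim : dimMod R ↥L < dimMod R ↥(D (i + 1))) : L ≤ D i := by
  suffices h : ∀ d, i + d ≤ ℓ → L ≤ D (i + d) → L ≤ D i by
    refine h (ℓ - i) (by omega) ?_
    rw [show i + (ℓ - i) = ℓ by omega, hD.2.1]; exact le_top
  intro d
  induction d with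
  | zero => intro _ h; simpa using h
  | succ d ih =>
    intro hdl hL
    refine ih (by omega) (hD.2.2.2.2 (i + d) (by omega) L hL ?_)
    exact lt_of_lt_of_le hdim (hD.dim_mono (by omega) (by omega))

end

/-- for the dimension filtration `{D_i}` of a finitely generated module `M` over
a Noetherian local ring, `Ass_R(M/D_i) = { 𝔭 ∈ Ass_R M : dim R/𝔭 ≥ dim D_{i+1} }` for
`0 ≤ i < ℓ`. -/
theorem stmt5 {R : Type*} [CommRing R] [IsNoetherianRing R] [IsLocalRing R]
    {M : Type*} [AddCommGroup M] [Module R M] [Module.Finite R M] [Nontrivial M]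
    (ℓ : ℕ) (D : ℕ → Submodule R M) (hD : IsDimFiltration ℓ D)
    (i : ℕ) (hi : i < ℓ) :
    associatedPrimes R (M ⧸ D i)
      = {p | p ∈ associatedPrimes R M ∧ dimMod R ↥(D (i + 1)) ≤ ringKrullDim (R ⧸ p)} := by
  have hDd : dimMod R ↥(D i) < dimMod R ↥(D (i + 1)) := hD.2.2.2.1 i hi
  ext p
  simp only [Set.mem_setOf_eq]
  constructor
  · intro hpa
    obtain ⟨hp, xb, hxb⟩ := isAssociatedPrime_iff.mp hpa
    obtain ⟨x, rfl⟩ := Submodule.Quotient.mk_surjective (D i) xb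
    have hmem : ∀ r : R, r ∈ p ↔ r • x ∈ D i := by
      intro r
      rw [hxb, Submodule.mem_colon_singleton, Submodule.mem_bot, ← Submodule.Quotient.mk_smul,
        Submodule.Quotient.mk_eq_zero]
    -- Step A: the dimension inequality
    have hdim : dimMod R ↥(D (i + 1)) ≤ ringKrullDim (R ⧸ p) := by
      by_contra hcon
      have hlt : ringKrullDim (R ⧸ p) < dimMod R ↥(D (i + 1)) := not_le.mp hcon
      set L : Submodule R M := D i ⊔ R ∙ x with hLdef
      have hann : (D i).annihilator * p ≤ L.annihilator := by
        rw [Ideal.mul_le]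
        intro s hs r hr
        rw [Submodule.mem_annihilator]
        intro y hy
        obtain ⟨n, hn, z, hz, rfl⟩ := Submodule.mem_sup.mp hy
        obtain ⟨a, rfl⟩ := Submodule.mem_span_singleton.mp hz
        have h1 : (s * r) • n = 0 := by
          rw [mul_comm, mul_smul, Submodule.mem_annihilator.mp hs n hn, smul_zero]
        have h2 : (s * r) • (a • x) = 0 := by
          rw [mul_smul, smul_comm r a, smul_comm s a,
            Submodule.mem_annihilator.mp hs _ ((hmem r).mp hr), smul_zero]
        rw [smul_add, h1, h2, add_zero]
      have hLdim : dimMod R ↥L < dimMod R ↥(D (i + 1)) := by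
        calc dimMod R ↥L ≤ ringKrullDim (R ⧸ ((D i).annihilator * p)) := dimQuot_anti hann
          _ ≤ max (ringKrullDim (R ⧸ (D i).annihilator)) (ringKrullDim (R ⧸ p)) :=
              ringKrullDim_quotient_mul_le _ _
          _ < dimMod R ↥(D (i + 1)) := max_lt hDd hlt
      have hL : L ≤ D i := hD.le_of_dim_lt hi L hLdim
      have hxDi : x ∈ D i :=
        hL (Submodule.mem_sup_right (Submodule.mem_span_singleton_self x))
      have hone : (1 : R) ∈ p := (hmem 1).mpr (by simpa using hxDi)
      exact hp.ne_top ((Ideal.eq_top_iff_one _).mpr hone)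
    -- Step B: find `s` annihilating `D i` outside `p`
    have hns : ¬ (D i).annihilator ≤ p := by
      intro hle
      exact absurd (hdim.trans (dimQuot_anti hle)) (not_le.mpr hDd)
    obtain ⟨s, hs, hsp⟩ := SetLike.not_le_iff_exists.mp hns
    refine ⟨isAssociatedPrime_iff.mpr ⟨hp, s • x, ?_⟩, hdim⟩
    ext r
    rw [Submodule.mem_colon_singleton, Submodule.mem_bot]
    constructor
    · intro hr
      rw [smul_comm]
      exact Submodule.mem_annihilator.mp hs _ ((hmem r).mp hr)
    · intro h
      have hrs : r * s ∈ p :=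
        (hmem (r * s)).mpr (by rw [mul_smul, h]; exact (D i).zero_mem)
      rcases hp.mem_or_mem hrs with h' | h'
      · exact h'
      · exact absurd h' hsp
  · rintro ⟨hpa, hdim⟩
    obtain ⟨hp, x, hx⟩ := isAssociatedPrime_iff.mp hpa
    have hns : ¬ (D i).annihilator ≤ p := by
      intro hle
      exact absurd (hdim.trans (dimQuot_anti hle)) (not_le.mpr hDd)
    obtain ⟨s, hs, hsp⟩ := SetLike.not_le_iff_exists.mp hns
    refine isAssociatedPrime_iff.mpr ⟨hp, Submodule.Quotient.mk x, ?_⟩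
    ext r
    rw [Submodule.mem_colon_singleton, Submodule.mem_bot, ← Submodule.Quotient.mk_smul,
      Submodule.Quotient.mk_eq_zero]
    constructor
    · intro hr
      have hr0 : r • x = 0 := by
        rw [hx] at hr
        exact (Submodule.mem_bot R).mp (Submodule.mem_colon_singleton.mp hr)
      rw [hr0]; exact (D i).zero_mem
    · intro h
      have h0 : (s * r) • x = 0 := by
        rw [mul_smul]
        exact Submodule.mem_annihilator.mp hs _ h
      have hsr : s * r ∈ p := by
        rw [hx]
        exact Submodule.mem_colon_singleton.mpr ((Submodule.mem_bot R).mpr h0)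
      rcases hp.mem_or_mem hsr with h' | h'
      · exact absurd h' hsp
      · exact h'
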